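/- For d ∈ (0, 2g−2], consider the set F̃_d = {(M, μ, ν) : M ∈ Pic^d(X), μ ∈ H⁰(M⁻¹K) \ {0}, ν ∈ H⁰(MK)} with the ℂ*-action λ·(M,μ,ν) = (M, λμ, λ⁻¹ν). This action is free, and the map F_d = F̃_d/ℂ* → Sym^{2g−2−d}(X) sending [(M,μ,ν)] to the divisor of μ is surjective with fiber over D ∈ Sym^{2g−2−d}(X) in bijection with H⁰(O(−D)K²) ≅ ℂ^{d+g−1}. -/

import Mathlib

/-!
`ℂ*` acts on `μ` with weight `1`, so it acts freely as soon as `μ ≠ 0`. The divisor `D` of `μ`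
determines `M⁻¹K = O(D)` and, for `μ ≠ 0`, determines `μ` up to a scalar; rescaling along the
orbit normalises `μ` to a fixed section `μ₀` with divisor `D`, after which only `ν ∈ H⁰(MK)`
remains free, and `MK = O(−D)K²` has degree `2g − 2 + d > 2g − 2`, so Riemann–Roch gives its
dimension.
-/

lemma map_inv_eq_neg_of_map_mul {G A : Type*} [Group G] [AddGroup A] {f : G → A}
    (hf : ∀ a b, f (a * b) = f a + f b) (a : G) : f a⁻¹ = -f a := by
  have h1 : f 1 = 0 := by simpa using hf 1 1
  exact eq_neg_of_add_eq_zero_right (by rw [← hf, mul_inv_cancel, h1])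

lemma Units.eq_one_of_smul_eq_self {𝕜 V : Type*} [Field 𝕜] [AddCommGroup V] [Module 𝕜 V]
    {c : 𝕜ˣ} {v : V} (hv : v ≠ 0) (h : c • v = v) : c = 1 :=
  Units.ext <| smul_left_injective 𝕜 hv <| h.trans (one_smul 𝕜 v).symm

namespace AntidiagonalScaling

variable {G ι : Type*} [CommGroup G] {A B : ι → Type*}
  [∀ i, MulAction G (A i)] [∀ i, MulAction G (B i)]

def scale (c : G) (x : Σ i, A i × B i) : Σ i, A i × B i := ⟨x.1, c • x.2.1, c⁻¹ • x.2.2⟩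

lemma scale_mk (c : G) (i : ι) (a : A i) (b : B i) :
    scale c ⟨i, a, b⟩ = ⟨i, c • a, c⁻¹ • b⟩ := rfl

lemma scale_mk_eq_mk_iff {c : G} {i : ι} {a a' : A i} {b b' : B i} :
    scale c ⟨i, a, b⟩ = ⟨i, a', b'⟩ ↔ c • a = a' ∧ c⁻¹ • b = b' :=
  sigma_mk_injective.eq_iff.trans Prod.ext_iff

lemma scale_one (x : Σ i, A i × B i) : scale (1 : G) x = x := by
  simp [scale]

lemma scale_scale (c c' : G) (x : Σ i, A i × B i) : scale c (scale c' x) = scale (c * c') x := by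
  obtain ⟨i, a, b⟩ := x
  simp only [scale_mk, smul_smul, mul_inv]

lemma smul_fst_eq_of_scale_eq_self {c : G} {x : Σ i, A i × B i} (h : scale c x = x) :
    c • x.2.1 = x.2.1 := by
  obtain ⟨i, a, b⟩ := x
  exact (scale_mk_eq_mk_iff.1 h).1

variable (G) in
def ScaleRel (P : (Σ i, A i × B i) → Prop) (x y : {x // P x}) : Prop :=
  ∃ c : G, y.val = scale c x.val

lemma equivalence_scaleRel (P : (Σ i, A i × B i) → Prop) : Equivalence (ScaleRel G P) where
  refl x := ⟨1, (scale_one _).symm⟩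
  symm := fun ⟨c, h⟩ => ⟨c⁻¹, by rw [h, scale_scale, inv_mul_cancel, scale_one]⟩
  trans := fun ⟨c, h⟩ ⟨c', h'⟩ => ⟨c' * c, by rw [h', h, scale_scale]⟩

theorem bijective_mk_fiber {P : (Σ i, A i × B i) → Prop} {E : Type*}
    (q : Quot (ScaleRel G P) → E) (D : E) {i₀ : ι} {a₀ : A i₀}
    (hfree : ∀ c : G, c • a₀ = a₀ → c = 1) (hP : ∀ b, P ⟨i₀, a₀, b⟩)
    (hq : ∀ b, q (Quot.mk _ ⟨_, hP b⟩) = D)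
    (hfib : ∀ x, q (Quot.mk _ x) = D → ∃ (c : G) (b : B i₀), x.val = scale c ⟨i₀, a₀, b⟩) :
    Function.Bijective fun b : B i₀ => (⟨Quot.mk _ ⟨_, hP b⟩, hq b⟩ : {y // q y = D}) := by
  constructor
  · intro b b' hbb'
    obtain ⟨c, hc⟩ := (equivalence_scaleRel P).eqvGen_iff.1
      (Quot.eqvGen_exact (congrArg Subtype.val hbb'))
    obtain ⟨ha, hb⟩ := scale_mk_eq_mk_iff.1 hc.symm
    obtain rfl := hfree c ha
    simpa using hb
  · rintro ⟨y, hy⟩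
    induction y using Quot.ind with
    | mk x =>
      obtain ⟨c, b, hx⟩ := hfib x hy
      exact ⟨b, Subtype.ext (Quot.sound ⟨c, hx⟩)⟩

end AntidiagonalScaling

open AntidiagonalScaling

theorem Fd_free_action_and_fibration_general
    (Pic : Type*) [CommGroup Pic] (deg : Pic → ℤ)
    (hdeg : ∀ L N : Pic, deg (L * N) = deg L + deg N)
    (g : ℕ) (K : Pic) (hK : deg K = 2 * g - 2)
    (H0 : Pic → Type*) [∀ L, AddCommGroup (H0 L)] [∀ L, Module ℂ (H0 L)]
    (EffDiv : Type*) (degD : EffDiv → ℕ)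
    (div : (L : Pic) → H0 L → EffDiv) (OD : EffDiv → Pic)
    (hOD : ∀ D, deg (OD D) = degD D)
    (hdivdeg : ∀ (L : Pic) (s : H0 L), s ≠ 0 → (degD (div L s) : ℤ) = deg L)
    (hdivOD : ∀ (L : Pic) (s : H0 L), s ≠ 0 → OD (div L s) = L)
    (hdivsmul : ∀ (L : Pic) (s : H0 L) (c : ℂˣ), div L ((c : ℂ) • s) = div L s)
    (hdivinj : ∀ (L : Pic) (s t : H0 L), s ≠ 0 → t ≠ 0 → div L s = div L t →
      ∃ c : ℂˣ, t = (c : ℂ) • s)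
    (hdivsurj : ∀ D : EffDiv, ∃ s : H0 (OD D), s ≠ 0 ∧ div (OD D) s = D)
    (hdim : ∀ L : Pic, 2 * (g : ℤ) - 2 < deg L →
      (Module.finrank ℂ (H0 L) : ℤ) = deg L + 1 - g)
    (d : ℕ) (hd0 : 0 < d) :
    -- F̃_d and the ℂ*-action relation
    let FdTil := {x : (M : Pic) × (H0 (M⁻¹ * K) × H0 (M * K)) //
      deg x.1 = d ∧ x.2.1 ≠ 0}
    let r : FdTil → FdTil → Prop := fun x y => ∃ c : ℂˣ,
      y.val = ⟨x.val.1, ((c : ℂ) • x.val.2.1, ((c⁻¹ : ℂˣ) : ℂ) • x.val.2.2)⟩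
    -- (1) the ℂ*-action is free
    (∀ (x : FdTil) (c : ℂˣ),
      (⟨x.val.1, ((c : ℂ) • x.val.2.1, ((c⁻¹ : ℂˣ) : ℂ) • x.val.2.2)⟩ :
        (M : Pic) × (H0 (M⁻¹ * K) × H0 (M * K))) = x.val → c = 1) ∧
    -- (2) the divisor of μ lies in Sym^{2g−2−d}(X)
    (∀ x : FdTil, (degD (div (x.val.1⁻¹ * K) x.val.2.1) : ℤ) = 2 * g - 2 - d) ∧
    -- (3) the induced map F_d = F̃_d/ℂ* → Sym^{2g−2−d}(X) is well defined,
    -- surjective, and its fiber over D is in bijection with H⁰(O(−D)K²),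
    -- a vector space of dimension d + g − 1
    (∃ p : Quot r → EffDiv,
      (∀ x : FdTil, p (Quot.mk r x) = div (x.val.1⁻¹ * K) x.val.2.1) ∧
      (∀ D : EffDiv, (degD D : ℤ) = 2 * g - 2 - d →
        (∃ y : Quot r, p y = D) ∧
        Nonempty ({y : Quot r // p y = D} ≃ H0 ((OD D)⁻¹ * K ^ 2)) ∧
        (Module.finrank ℂ (H0 ((OD D)⁻¹ * K ^ 2)) : ℤ) = d + g - 1)) := by
  intro FdTil r
  have deg_inv := map_inv_eq_neg_of_map_mul hdeg
  refine ⟨fun x c h => Units.eq_one_of_smul_eq_self x.prop.2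
      (smul_fst_eq_of_scale_eq_self (c := c) (x := x.val) h), fun ⟨⟨M, μ, ν⟩, hM, hμ⟩ => ?_, ?_⟩
  · rw [hdivdeg _ μ hμ, hdeg, deg_inv, hM, hK]
    ring
  let p : Quot r → EffDiv := Quot.lift (fun x => div (x.val.1⁻¹ * K) x.val.2.1) <| by
    rintro x ⟨y, hy⟩ ⟨c, rfl : y = _⟩
    exact (hdivsmul _ _ c).symm
  refine ⟨p, fun _ => rfl, fun D hD => ?_⟩
  set M₀ := (OD D)⁻¹ * K
  have hM₀ : deg M₀ = d := by
    rw [hdeg, deg_inv, hOD, hD, hK]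
    ring
  obtain ⟨μ₀, hμ₀, hdivμ₀⟩ : ∃ μ₀ : H0 (M₀⁻¹ * K), μ₀ ≠ 0 ∧ div _ μ₀ = D := by
    rw [show M₀⁻¹ * K = OD D by simp [M₀]]
    exact hdivsurj D
  have hfib : ∀ x : FdTil, p (Quot.mk r x) = D →
      ∃ (c : ℂˣ) (ν : H0 (M₀ * K)), x.val = scale c ⟨M₀, μ₀, ν⟩ := by
    rintro ⟨⟨M, μ, ν⟩, -, hμ⟩ (hx : div (M⁻¹ * K) μ = D)
    have hODM : OD D = M⁻¹ * K := hx ▸ hdivOD _ μ hμ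
    obtain rfl : M = M₀ := by simp [M₀, hODM]
    obtain ⟨c, rfl⟩ := hdivinj _ μ₀ μ hμ₀ hμ (hdivμ₀.trans hx.symm)
    exact ⟨c, c • ν, by rw [scale_mk, inv_smul_smul]; rfl⟩
  have hbij : Function.Bijective fun ν : H0 (M₀ * K) =>
      (⟨Quot.mk r ⟨⟨M₀, μ₀, ν⟩, hM₀, hμ₀⟩, hdivμ₀⟩ : {y // p y = D}) :=
    bijective_mk_fiber (G := ℂˣ) (A := fun M => H0 (M⁻¹ * K)) (B := fun M => H0 (M * K))
      (P := fun x => deg x.1 = d ∧ x.2.1 ≠ 0) p D (fun _ => Units.eq_one_of_smul_eq_self hμ₀)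
      _ _ hfib
  have hMK : M₀ * K = (OD D)⁻¹ * K ^ 2 := by rw [pow_two, mul_assoc]
  have hdegMK : deg ((OD D)⁻¹ * K ^ 2) = 2 * g - 2 + d := by
    rw [← hMK, hdeg, hM₀, hK]
    ring
  refine ⟨⟨Quot.mk r ⟨⟨M₀, μ₀, 0⟩, hM₀, hμ₀⟩, hdivμ₀⟩,
    ⟨(Equiv.ofBijective _ hbij).symm.trans (Equiv.cast (congrArg H0 hMK))⟩, ?_⟩
  rw [hdim _ (by omega), hdegMK]
  ring

/-- For `0 < d ≤ 2g−2` consider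
`F̃_d = {(M, μ, ν) : M ∈ Pic^d(X), μ ∈ H⁰(M⁻¹K) \ {0}, ν ∈ H⁰(MK)}` with the
`ℂ*`-action `λ·(M,μ,ν) = (M, λμ, λ⁻¹ν)`.  The action is free, and the map
`F_d = F̃_d/ℂ* → Sym^{2g−2−d}(X)`, `[(M,μ,ν)] ↦ div(μ)`, is well defined and
surjective, with fiber over `D` in bijection with `H⁰(O(−D)K²) ≅ ℂ^{d+g−1}`.

We axiomatize divisor/section theory on a compact Riemann surface `X` of genus
`g ≥ 2`: `Pic` is the group of line bundles with degree `deg` and canonical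
bundle `K`; `H0 L` is the (complex vector) space of sections of `L`; `EffDiv` is
the set of effective divisors (`Sym(X)`), graded by `degD`; `div` assigns to a
nonzero section its divisor of zeros, `OD D` is the line bundle of a divisor.
The standing facts (the divisor of a nonzero section has degree `deg L` and
determines the bundle and the section up to scale, every effective divisor is a
divisor of zeros, and `h⁰(L) = deg L + 1 − g` for `deg L > 2g−2`) are
hypotheses. -/
theorem Fd_free_action_and_fibration
    (Pic : Type*) [CommGroup Pic] (deg : Pic → ℤ)
    (hdeg : ∀ L N : Pic, deg (L * N) = deg L + deg N)
    (g : ℕ) (hg : 2 ≤ g) (K : Pic) (hK : deg K = 2 * g - 2)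
    (H0 : Pic → Type*) [∀ L, AddCommGroup (H0 L)] [∀ L, Module ℂ (H0 L)]
    (EffDiv : Type*) (degD : EffDiv → ℕ)
    (div : (L : Pic) → H0 L → EffDiv) (OD : EffDiv → Pic)
    (hOD : ∀ D, deg (OD D) = degD D)
    (hdivdeg : ∀ (L : Pic) (s : H0 L), s ≠ 0 → (degD (div L s) : ℤ) = deg L)
    (hdivOD : ∀ (L : Pic) (s : H0 L), s ≠ 0 → OD (div L s) = L)
    (hdivsmul : ∀ (L : Pic) (s : H0 L) (c : ℂˣ), div L ((c : ℂ) • s) = div L s)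
    (hdivinj : ∀ (L : Pic) (s t : H0 L), s ≠ 0 → t ≠ 0 → div L s = div L t →
      ∃ c : ℂˣ, t = (c : ℂ) • s)
    (hdivsurj : ∀ D : EffDiv, ∃ s : H0 (OD D), s ≠ 0 ∧ div (OD D) s = D)
    (hdim : ∀ L : Pic, 2 * (g : ℤ) - 2 < deg L →
      (Module.finrank ℂ (H0 L) : ℤ) = deg L + 1 - g)
    (d : ℕ) (hd0 : 0 < d) (hd1 : d ≤ 2 * g - 2) :
    -- F̃_d and the ℂ*-action relation
    let FdTil := {x : (M : Pic) × (H0 (M⁻¹ * K) × H0 (M * K)) //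
      deg x.1 = d ∧ x.2.1 ≠ 0}
    let r : FdTil → FdTil → Prop := fun x y => ∃ c : ℂˣ,
      y.val = ⟨x.val.1, ((c : ℂ) • x.val.2.1, ((c⁻¹ : ℂˣ) : ℂ) • x.val.2.2)⟩
    -- (1) the ℂ*-action is free
    (∀ (x : FdTil) (c : ℂˣ),
      (⟨x.val.1, ((c : ℂ) • x.val.2.1, ((c⁻¹ : ℂˣ) : ℂ) • x.val.2.2)⟩ :
        (M : Pic) × (H0 (M⁻¹ * K) × H0 (M * K))) = x.val → c = 1) ∧
    -- (2) the divisor of μ lies in Sym^{2g−2−d}(X)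
    (∀ x : FdTil, (degD (div (x.val.1⁻¹ * K) x.val.2.1) : ℤ) = 2 * g - 2 - d) ∧
    -- (3) the induced map F_d = F̃_d/ℂ* → Sym^{2g−2−d}(X) is well defined,
    -- surjective, and its fiber over D is in bijection with H⁰(O(−D)K²),
    -- a vector space of dimension d + g − 1
    (∃ p : Quot r → EffDiv,
      (∀ x : FdTil, p (Quot.mk r x) = div (x.val.1⁻¹ * K) x.val.2.1) ∧
      (∀ D : EffDiv, (degD D : ℤ) = 2 * g - 2 - d →
        (∃ y : Quot r, p y = D) ∧
        Nonempty ({y : Quot r // p y = D} ≃ H0 ((OD D)⁻¹ * K ^ 2)) ∧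
        (Module.finrank ℂ (H0 ((OD D)⁻¹ * K ^ 2)) : ℤ) = d + g - 1)) :=
  Fd_free_action_and_fibration_general Pic deg hdeg g K hK H0 EffDiv degD div OD hOD hdivdeg hdivOD
    hdivsmul hdivinj hdivsurj hdim d hd0
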